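/- Let (L,[·,·],α) be a hom-Lie superalgebra over a field K satisfying ad(x)∘ad(α(y)) - (-1)^{|x||y|} ad(y)∘ad(α(x)) = α∘ad([x,y]) for all homogeneous x,y, and let ω : L × L → L* be an even 2-cocycle, so that (L ⊕ L*, [·,·]_{L⊕L*}, α') with [x+f, y+g]_{L⊕L*} := [x,y] + ω(x,y) + π(x)g - (-1)^{|x||y|}π(y)f and α'(x+f) := α(x) + f∘α is a hom-Lie superalgebra. Define q_L(x+f, y+g) := f(y) + (-1)^{|x||y|}g(x). Then (L ⊕ L*, q_L, α') is a quadratic hom-Lie superalgebra (i.e. q_L is nondegenerate, invariant, supersymmetric and consistent) if and only if ω is supercyclic, i.e. ω(x,y)(z) = (-1)^{|x|(|y|+|z|)}ω(y,z)(x) for all homogeneous x,y,z ∈ L. -/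

import Mathlib

open Module

/-- The sign `(-1)^{ij}` for degrees `i j : ZMod 2`, valued in the field `K`. -/
def sgn (K : Type*) [Field K] (i j : ZMod 2) : K := (-1 : K) ^ (i.val * j.val)

/-- The raw data of a hom-Lie superalgebra on a `K`-vector space `L`:
a `ZMod 2`-grading, a bilinear bracket and a linear map `α`. -/
structure HomLieSuperData (K : Type*) [Field K] (L : Type*) [AddCommGroup L] [Module K L] where
  grading : ZMod 2 → Submodule K L
  bracket : L →ₗ[K] L →ₗ[K] L
  alpha : L →ₗ[K] L

namespace HomLieSuperData

variable {K : Type*} [Field K] {L : Type*} [AddCommGroup L] [Module K L]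

/-- The axioms making the data of `HomLieSuperData` into a hom-Lie superalgebra. -/
structure IsHomLieSuper (D : HomLieSuperData K L) : Prop where
  internal : DirectSum.IsInternal D.grading
  bracket_even : ∀ i j : ZMod 2, ∀ x ∈ D.grading i, ∀ y ∈ D.grading j,
    D.bracket x y ∈ D.grading (i + j)
  alpha_even : ∀ i : ZMod 2, ∀ x ∈ D.grading i, D.alpha x ∈ D.grading i
  skew : ∀ i j : ZMod 2, ∀ x ∈ D.grading i, ∀ y ∈ D.grading j,
    D.bracket x y = -(sgn K i j) • D.bracket y x
  jacobi : ∀ i j k : ZMod 2, ∀ x ∈ D.grading i, ∀ y ∈ D.grading j, ∀ z ∈ D.grading k,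
    sgn K i k • D.bracket (D.alpha x) (D.bracket y z)
      + sgn K i j • D.bracket (D.alpha y) (D.bracket z x)
      + sgn K j k • D.bracket (D.alpha z) (D.bracket x y) = 0

/-- `D` is multiplicative if `α` is a morphism for the bracket. -/
def IsMultiplicative (D : HomLieSuperData K L) : Prop :=
  ∀ x y : L, D.alpha (D.bracket x y) = D.bracket (D.alpha x) (D.alpha y)

end HomLieSuperData

namespace HomLieSuperData

variable {K : Type*} [Field K] {L : Type*} [AddCommGroup L] [Module K L]

/-- The induced grading on the dual space: `(L*)_i` consists of the functionals
vanishing on every `L_j` with `j ≠ i`. -/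
def dualGrading (D : HomLieSuperData K L) (i : ZMod 2) : Submodule K (Module.Dual K L) where
  carrier := {f | ∀ j : ZMod 2, j ≠ i → ∀ x ∈ D.grading j, f x = 0}
  add_mem' := fun hf hg j hj x hx => by simp [hf j hj x hx, hg j hj x hx]
  zero_mem' := fun j hj x hx => rfl
  smul_mem' := fun c f hf j hj x hx => by simp [hf j hj x hx]

/-- The coadjoint action on homogeneous elements: for `x` of degree `i` and `f` of degree
`j`, `π(x) f = -(-1)^{ij} f ∘ ad(x)`. -/
def coadj (D : HomLieSuperData K L) (i j : ZMod 2) (x : L) (f : Module.Dual K L) :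
    Module.Dual K L :=
  -(sgn K i j) • (f ∘ₗ D.bracket x)

/-- The coadjoint representation of `L` on `L*` exists, i.e.
`ad(x) ∘ ad(α y) - (-1)^{|x||y|} ad(y) ∘ ad(α x) = α ∘ ad([x,y])` on homogeneous elements. -/
def HasCoadjRep (D : HomLieSuperData K L) : Prop :=
  ∀ i j : ZMod 2, ∀ x ∈ D.grading i, ∀ y ∈ D.grading j, ∀ m : L,
    D.bracket x (D.bracket (D.alpha y) m) - sgn K i j • D.bracket y (D.bracket (D.alpha x) m)
      = D.alpha (D.bracket (D.bracket x y) m)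

/-- `ω : L × L → L*` is even: `ω(L_i, L_j) ⊆ (L*)_{i+j}`. -/
def OmegaEven (D : HomLieSuperData K L) (ω : L →ₗ[K] L →ₗ[K] Module.Dual K L) : Prop :=
  ∀ i j : ZMod 2, ∀ x ∈ D.grading i, ∀ y ∈ D.grading j, ω x y ∈ dualGrading D (i + j)

/-- `ω` is super-skewsymmetric. -/
def OmegaSkew (D : HomLieSuperData K L) (ω : L →ₗ[K] L →ₗ[K] Module.Dual K L) : Prop :=
  ∀ i j : ZMod 2, ∀ x ∈ D.grading i, ∀ y ∈ D.grading j, ω x y = -(sgn K i j) • ω y x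

/-- The 2-cocycle identity for `ω` with respect to the coadjoint representation. -/
def OmegaCocycle (D : HomLieSuperData K L) (ω : L →ₗ[K] L →ₗ[K] Module.Dual K L) : Prop :=
  ∀ i j k : ZMod 2, ∀ x ∈ D.grading i, ∀ y ∈ D.grading j, ∀ z ∈ D.grading k,
    coadj D i (j + k) (D.alpha x) (ω y z)
      - sgn K i j • coadj D j (i + k) (D.alpha y) (ω x z)
      + sgn K (i + j) k • coadj D k (i + j) (D.alpha z) (ω x y)
      + ω (D.alpha x) (D.bracket y z)
      + sgn K j k • ω (D.bracket x z) (D.alpha y)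
      - ω (D.bracket x y) (D.alpha z) = 0

/-- `ω` is supercyclic: `ω(x,y)(z) = (-1)^{|x|(|y|+|z|)} ω(y,z)(x)`. -/
def OmegaSupercyclic (D : HomLieSuperData K L) (ω : L →ₗ[K] L →ₗ[K] Module.Dual K L) : Prop :=
  ∀ i j k : ZMod 2, ∀ x ∈ D.grading i, ∀ y ∈ D.grading j, ∀ z ∈ D.grading k,
    ω x y z = sgn K i (j + k) * ω y z x

/-- A bilinear bracket `Bext` on `L ⊕ L*` is the `T*`-extension bracket associated to `ω`
if on homogeneous elements
`[x+f, y+g] = [x,y] + ω(x,y) + π(x) g - (-1)^{|x||y|} π(y) f`. -/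
def IsExtBracket (D : HomLieSuperData K L) (ω : L →ₗ[K] L →ₗ[K] Module.Dual K L)
    (Bext : (L × Module.Dual K L) →ₗ[K] (L × Module.Dual K L) →ₗ[K] (L × Module.Dual K L)) :
    Prop :=
  ∀ (i j : ZMod 2) (x y : L) (f g : Module.Dual K L),
    x ∈ D.grading i → f ∈ dualGrading D i → y ∈ D.grading j → g ∈ dualGrading D j →
      Bext (x, f) (y, g) =
        (D.bracket x y, ω x y + coadj D i j x g - sgn K i j • coadj D j i y f)

/-- The `T*`-extension data on `L ⊕ L*` with a given bracket `Bext`: the grading is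
`(L ⊕ L*)_i = L_i ⊕ (L*)_i` and the structure map is `α'(x+f) = α(x) + f ∘ α`. -/
def extData (D : HomLieSuperData K L)
    (Bext : (L × Module.Dual K L) →ₗ[K] (L × Module.Dual K L) →ₗ[K] (L × Module.Dual K L)) :
    HomLieSuperData K (L × Module.Dual K L) where
  grading i := (D.grading i).prod (dualGrading D i)
  bracket := Bext
  alpha := D.alpha.prodMap D.alpha.dualMap

/-- The derived series `L^(0) = L`, `L^(n+1) = [L^(n), L^(n)]`. -/
def derivedSeries (D : HomLieSuperData K L) : ℕ → Submodule K L
  | 0 => ⊤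
  | n + 1 => Submodule.span K
      {z | ∃ x ∈ derivedSeries D n, ∃ y ∈ derivedSeries D n, z = D.bracket x y}

/-- The central descending series `L^0 = L`, `L^{n+1} = [L^n, L]`. -/
def lowerCentral (D : HomLieSuperData K L) : ℕ → Submodule K L
  | 0 => ⊤
  | n + 1 => Submodule.span K {z | ∃ x ∈ lowerCentral D n, ∃ y : L, z = D.bracket x y}

/-- `D` is solvable of length exactly `k`. -/
def IsSolvableOfLength (D : HomLieSuperData K L) (k : ℕ) : Prop :=
  derivedSeries D k = ⊥ ∧ ∀ m < k, derivedSeries D m ≠ ⊥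

/-- `D` is nilpotent of length exactly `k`. -/
def IsNilpotentOfLength (D : HomLieSuperData K L) (k : ℕ) : Prop :=
  lowerCentral D k = ⊥ ∧ ∀ m < k, lowerCentral D m ≠ ⊥

end HomLieSuperData

/-!
For homogeneous `p = x + f`, `q = y + g`, `r = z + h` in `L ⊕ L*`, expanding the bracket and
using the super skew-symmetry of `[·,·]` on `L` gives
`q_L([p,q], r) - q_L(p, [q,r]) = ω(x,y)(z) - (-1)^{|x|(|y|+|z|)} ω(y,z)(x)`:
every term involving `f`, `g` or `h` cancels. Hence invariance on homogeneous triples is exactly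
supercyclicity, and it extends to all triples since homogeneous elements span `L ⊕ L*` (the
dual grading is exhaustive because `L* = L₀* ⊕ L₁*` via the projections of `L = L₀ ⊕ L₁`).
Supersymmetry and consistency are immediate from the formula for `q_L`, and `q_L` is
nondegenerate because pairing with `L` recovers `f`, while pairing with the homogeneous
functionals, which separate the points of `L`, recovers `x`.
-/

section Sign

variable {K : Type*} [Field K]

@[simp]
lemma sgn_zero_left (j : ZMod 2) : sgn K 0 j = 1 := by simp [sgn]

@[simp]
lemma sgn_zero_right (i : ZMod 2) : sgn K i 0 = 1 := by simp [sgn]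

@[simp]
lemma sgn_one_one : sgn K 1 1 = -1 := by simp [sgn, show (1 : ZMod 2).val = 1 from rfl]

lemma sgn_comm (i j : ZMod 2) : sgn K i j = sgn K j i := by rw [sgn, sgn, mul_comm]

lemma sgn_mul_self (i j : ZMod 2) : sgn K i j * sgn K i j = 1 := by
  rw [sgn, ← pow_add, ← two_mul, pow_mul]; simp

lemma sgn_ne_zero (i j : ZMod 2) : sgn K i j ≠ 0 :=
  left_ne_zero_of_mul_eq_one (sgn_mul_self i j)

end Sign

lemma ZMod.eq_zero_or_eq_one_of_two (i : ZMod 2) : i = 0 ∨ i = 1 := by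
  revert i; decide

lemma ZMod.eq_add_one_of_ne_of_two {i j : ZMod 2} : j ≠ i → j = i + 1 := by
  revert i j; decide

lemma DirectSum.IsInternal.isCompl_zero_one {R M : Type*} [Ring R] [AddCommGroup M] [Module R M]
    {G : ZMod 2 → Submodule R M} (h : DirectSum.IsInternal G) : IsCompl (G 0) (G 1) :=
  (DirectSum.isInternal_submodule_iff_isCompl G zero_ne_one
    (Set.eq_univ_of_forall ZMod.eq_zero_or_eq_one_of_two).symm).mp h

lemma LinearMap.ext_of_iSup_eq_top {ι R M N : Type*} [Semiring R] [AddCommMonoid M] [Module R M]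
    [AddCommMonoid N] [Module R N] {p : ι → Submodule R M} (hp : ⨆ i, p i = ⊤)
    {f g : M →ₗ[R] N} (h : ∀ i, ∀ x ∈ p i, f x = g x) : f = g :=
  LinearMap.ext fun x => Submodule.iSup_induction p (motive := fun x => f x = g x)
    (hp ▸ Submodule.mem_top) h (by simp) fun x y hx hy => by simp [hx, hy]

namespace HomLieSuperData

variable {K : Type*} [Field K] {L : Type*} [AddCommGroup L] [Module K L] (D : HomLieSuperData K L)

lemma apply_eq_zero_of_mem_dualGrading {i j : ZMod 2} (hij : i ≠ j) {f : Dual K L}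
    (hf : f ∈ D.dualGrading i) {x : L} (hx : x ∈ D.grading j) : f x = 0 :=
  hf j hij.symm x hx

lemma mem_dualGrading_iff {i : ZMod 2} {f : Dual K L} :
    f ∈ D.dualGrading i ↔ ∀ x ∈ D.grading (i + 1), f x = 0 := by
  refine ⟨fun hf x hx => hf _ (by simp) x hx, fun hf j hj => ?_⟩
  obtain rfl := ZMod.eq_add_one_of_ne_of_two hj
  exact hf

lemma iSup_dualGrading (hD : DirectSum.IsInternal D.grading) : ⨆ i, D.dualGrading i = ⊤ := by
  have hc := hD.isCompl_zero_one
  refine eq_top_iff.2 fun f _ => ?_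
  have hf₀ : f ∘ₗ (D.grading 0).projection _ hc ∈ D.dualGrading 0 :=
    D.mem_dualGrading_iff.2 fun x hx => by simp [Submodule.projection_apply_of_mem_right hc hx]
  have hf₁ : f ∘ₗ (D.grading 1).projection _ hc.symm ∈ D.dualGrading 1 :=
    D.mem_dualGrading_iff.2 fun x hx => by
      simp [Submodule.projection_apply_of_mem_right hc.symm (show x ∈ D.grading 0 from hx)]
  have hf : f = f ∘ₗ (D.grading 0).projection _ hc + f ∘ₗ (D.grading 1).projection _ hc.symm := by
    rw [← LinearMap.comp_add, Submodule.projection_add_projection_eq_id, LinearMap.comp_id]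
  rw [hf]
  exact Submodule.add_mem _ (Submodule.mem_iSup_of_mem 0 hf₀) (Submodule.mem_iSup_of_mem 1 hf₁)

-- The grading of `D.extData Bext`, which does not depend on `Bext`.
def extGrading (i : ZMod 2) : Submodule K (L × Dual K L) :=
  (D.grading i).prod (D.dualGrading i)

lemma iSup_extGrading (hD : DirectSum.IsInternal D.grading) :
    ⨆ i, D.extGrading i = ⊤ := by
  rw [eq_top_iff, ← LinearMap.sup_range_inl_inr, LinearMap.range_eq_map, LinearMap.range_eq_map,
    ← hD.submodule_iSup_eq_top, ← D.iSup_dualGrading hD, Submodule.map_iSup, Submodule.map_iSup]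
  refine sup_le (iSup_mono fun i => ?_) (iSup_mono fun i => ?_)
  · rintro _ ⟨x, hx, rfl⟩
    exact ⟨hx, Submodule.zero_mem _⟩
  · rintro _ ⟨f, hf, rfl⟩
    exact ⟨Submodule.zero_mem _, hf⟩

lemma extGrading_induction (hD : DirectSum.IsInternal D.grading) {C : L × Dual K L → Prop}
    (mem : ∀ i, ∀ p ∈ D.extGrading i, C p) (add : ∀ p q, C p → C q → C (p + q))
    (p : L × Dual K L) : C p :=
  Submodule.iSup_induction _ (motive := C) (D.iSup_extGrading hD ▸ Submodule.mem_top) mem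
    (mem 0 0 (Submodule.zero_mem _)) add

variable {D} {ω : L →ₗ[K] L →ₗ[K] Dual K L}
  {Bext : (L × Dual K L) →ₗ[K] (L × Dual K L) →ₗ[K] (L × Dual K L)}

lemma coadj_mem_dualGrading (hD : D.IsHomLieSuper) {a b : ZMod 2} {w : L} {g : Dual K L}
    (hw : w ∈ D.grading a) (hg : g ∈ D.dualGrading b) : D.coadj a b w g ∈ D.dualGrading (a + b) :=
  D.mem_dualGrading_iff.2 fun m hm => by
    have hwm := hD.bracket_even a _ w hw m hm
    rw [show a + (a + b + 1) = b + 1 by linear_combination CharTwo.add_self_eq_zero a] at hwm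
    simp [coadj, D.mem_dualGrading_iff.1 hg _ hwm]

lemma extBracket_mem (hD : D.IsHomLieSuper) (hω : D.OmegaEven ω) (hB : D.IsExtBracket ω Bext)
    {i j : ZMod 2} {p q : L × Dual K L} (hp : p ∈ D.extGrading i)
    (hq : q ∈ D.extGrading j) : Bext p q ∈ D.extGrading (i + j) := by
  obtain ⟨x, f⟩ := p
  obtain ⟨y, g⟩ := q
  obtain ⟨hx, hf⟩ := hp
  obtain ⟨hy, hg⟩ := hq
  rw [hB i j x y f g hx hf hy hg]
  refine ⟨hD.bracket_even i j x hx y hy, Submodule.sub_mem _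
    (Submodule.add_mem _ (hω i j x hx y hy) (coadj_mem_dualGrading hD hx hg))
    (Submodule.smul_mem _ _ ?_)⟩
  rw [add_comm i j]
  exact coadj_mem_dualGrading hD hy hf

variable (D) in
def IsCanonicalPairing (qExt : (L × Dual K L) →ₗ[K] (L × Dual K L) →ₗ[K] K) : Prop :=
  ∀ (i j : ZMod 2) (x y : L) (f g : Dual K L),
    x ∈ D.grading i → f ∈ D.dualGrading i → y ∈ D.grading j → g ∈ D.dualGrading j →
      qExt (x, f) (y, g) = f y + sgn K i j * g x

namespace IsCanonicalPairing

variable {qExt : (L × Dual K L) →ₗ[K] (L × Dual K L) →ₗ[K] K} (hq : D.IsCanonicalPairing qExt)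
include hq

lemma apply_of_mem {i j : ZMod 2} {p q : L × Dual K L} (hp : p ∈ D.extGrading i)
    (hq' : q ∈ D.extGrading j) : qExt p q = p.2 q.1 + sgn K i j * q.2 p.1 :=
  hq i j p.1 q.1 p.2 q.2 hp.1 hp.2 hq'.1 hq'.2

lemma supersymmetric {i j : ZMod 2} {p q : L × Dual K L} (hp : p ∈ D.extGrading i)
    (hq' : q ∈ D.extGrading j) : qExt p q = sgn K i j • qExt q p := by
  rw [hq.apply_of_mem hp hq', hq.apply_of_mem hq' hp, smul_eq_mul, sgn_comm j i]
  linear_combination (-p.2 q.1) * sgn_mul_self (K := K) i j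

lemma consistent {i j : ZMod 2} (hij : i + j ≠ 0) {p q : L × Dual K L}
    (hp : p ∈ D.extGrading i) (hq' : q ∈ D.extGrading j) :
    qExt p q = 0 := by
  have hne : i ≠ j := by
    rintro rfl
    exact hij (CharTwo.add_self_eq_zero i)
  rw [hq.apply_of_mem hp hq', D.apply_eq_zero_of_mem_dualGrading hne hp.2 hq'.1,
    D.apply_eq_zero_of_mem_dualGrading hne.symm hq'.2 hp.1, mul_zero, add_zero]

lemma apply_inl (hD : DirectSum.IsInternal D.grading) {j : ZMod 2} {y : L}
    (hy : y ∈ D.grading j) (p : L × Dual K L) : qExt p (y, 0) = p.2 y := by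
  induction p using D.extGrading_induction hD with
  | mem i p hp => simpa using hq.apply_of_mem hp (show (y, 0) ∈ D.extGrading j from
      ⟨hy, Submodule.zero_mem _⟩)
  | add p p' h h' => simp [h, h']

lemma apply_inr (hD : DirectSum.IsInternal D.grading) {j : ZMod 2} {g : Dual K L}
    (hg : g ∈ D.dualGrading j) (p : L × Dual K L) : qExt p (0, g) = sgn K j j * g p.1 := by
  induction p using D.extGrading_induction hD with
  | mem i p hp =>
    rw [hq.apply_of_mem hp (show (0, g) ∈ D.extGrading j from
      ⟨Submodule.zero_mem _, hg⟩), map_zero, zero_add]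
    rcases eq_or_ne j i with rfl | hji
    · rfl
    · rw [D.apply_eq_zero_of_mem_dualGrading hji hg hp.1, mul_zero, mul_zero]
  | add p p' h h' => simp [h, h', mul_add]

lemma nondegenerate (hD : DirectSum.IsInternal D.grading) {p : L × Dual K L}
    (hp : ∀ q, qExt p q = 0) : p = 0 := by
  have hf : p.2 = 0 := LinearMap.ext_of_iSup_eq_top hD.submodule_iSup_eq_top fun j y hy => by
    rw [← hq.apply_inl hD hy, hp, LinearMap.zero_apply]
  have hx : p.1 = 0 := (Module.forall_dual_apply_eq_zero_iff K p.1).1 fun φ =>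
    LinearMap.congr_fun (LinearMap.ext_of_iSup_eq_top (D.iSup_dualGrading hD)
      (f := Dual.eval K L p.1) (g := 0) fun j g hg => by
        simpa [sgn_ne_zero, hp] using (hq.apply_inr hD hg p).symm) φ
  exact Prod.ext hx hf

lemma apply_bracket_sub_apply_bracket (hD : D.IsHomLieSuper) (hω : D.OmegaEven ω)
    (hB : D.IsExtBracket ω Bext) {i j k : ZMod 2} {p q r : L × Dual K L} (hp : p ∈ D.extGrading i)
    (hq' : q ∈ D.extGrading j) (hr : r ∈ D.extGrading k) :
    qExt (Bext p q) r - qExt p (Bext q r) = ω p.1 q.1 r.1 - sgn K i (j + k) * ω q.1 r.1 p.1 := by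
  rw [hq.apply_of_mem (extBracket_mem hD hω hB hp hq') hr,
    hq.apply_of_mem hp (extBracket_mem hD hω hB hq' hr)]
  obtain ⟨x, f⟩ := p
  obtain ⟨y, g⟩ := q
  obtain ⟨z, h⟩ := r
  obtain ⟨hx, hf⟩ := hp
  obtain ⟨hy, hg⟩ := hq'
  obtain ⟨hz, hh⟩ := hr
  rw [hB i j x y f g hx hf hy hg, hB j k y z g h hy hg hz hh]
  simp only [coadj, LinearMap.add_apply, LinearMap.sub_apply, LinearMap.smul_apply,
    LinearMap.comp_apply, smul_eq_mul]
  rw [hD.skew j i y hy x hx, hD.skew k i z hz x hx]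
  simp only [map_smul, smul_eq_mul, neg_mul]
  rcases ZMod.eq_zero_or_eq_one_of_two i with rfl | rfl <;>
    rcases ZMod.eq_zero_or_eq_one_of_two j with rfl | rfl <;>
    rcases ZMod.eq_zero_or_eq_one_of_two k with rfl | rfl <;>
    simp only [add_zero, zero_add, CharTwo.add_self_eq_zero, sgn_zero_left, sgn_zero_right,
      sgn_one_one] <;> ring

lemma invariant (hD : D.IsHomLieSuper) (hω : D.OmegaEven ω) (hB : D.IsExtBracket ω Bext)
    (hsc : D.OmegaSupercyclic ω) (p q r : L × Dual K L) :
    qExt (Bext p q) r = qExt p (Bext q r) := by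
  induction p using D.extGrading_induction hD.internal generalizing q r with
  | add p p' h h' => simp [h, h']
  | mem i p hp =>
  induction q using D.extGrading_induction hD.internal generalizing r with
  | add q q' h h' => simp [h, h']
  | mem j q hq' =>
  induction r using D.extGrading_induction hD.internal with
  | add r r' h h' => simp [h, h']
  | mem k r hr =>
  rw [← sub_eq_zero, hq.apply_bracket_sub_apply_bracket hD hω hB hp hq' hr,
    hsc i j k _ hp.1 _ hq'.1 _ hr.1, sub_self]

end IsCanonicalPairing

end HomLieSuperData

theorem extension_quadratic_iff_supercyclic_general {K : Type*} [Field K]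
    {L : Type*} [AddCommGroup L] [Module K L]
    (D : HomLieSuperData K L) (hD : D.IsHomLieSuper)
    (ω : L →ₗ[K] L →ₗ[K] Module.Dual K L)
    (hωeven : D.OmegaEven ω)
    (Bext : (L × Module.Dual K L) →ₗ[K] (L × Module.Dual K L) →ₗ[K] (L × Module.Dual K L))
    (hBext : D.IsExtBracket ω Bext)
    (qExt : (L × Module.Dual K L) →ₗ[K] (L × Module.Dual K L) →ₗ[K] K)
    (hq : ∀ (i j : ZMod 2) (x y : L) (f g : Module.Dual K L),
      x ∈ D.grading i → f ∈ D.dualGrading i → y ∈ D.grading j → g ∈ D.dualGrading j →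
        qExt (x, f) (y, g) = f y + sgn K i j * g x) :
    ((∀ p : L × Module.Dual K L, (∀ q, qExt p q = 0) → p = 0) ∧
      (∀ p q r : L × Module.Dual K L, qExt (Bext p q) r = qExt p (Bext q r)) ∧
      (∀ i j : ZMod 2, ∀ p ∈ (D.extData Bext).grading i, ∀ q ∈ (D.extData Bext).grading j,
        qExt p q = sgn K i j • qExt q p) ∧
      (∀ i j : ZMod 2, i + j ≠ 0 →
        ∀ p ∈ (D.extData Bext).grading i, ∀ q ∈ (D.extData Bext).grading j, qExt p q = 0)) ↔
      D.OmegaSupercyclic ω := by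
  have hq : D.IsCanonicalPairing qExt := hq
  refine ⟨fun ⟨_, hinv, _, _⟩ i j k x hx y hy z hz => ?_, fun hsc => ?_⟩
  · have hdefect := hq.apply_bracket_sub_apply_bracket (p := (x, 0)) (q := (y, 0)) (r := (z, 0))
      hD hωeven hBext ⟨hx, zero_mem _⟩ ⟨hy, zero_mem _⟩ ⟨hz, zero_mem _⟩
    rwa [hinv, sub_self, eq_comm, sub_eq_zero] at hdefect
  · exact ⟨fun _ => hq.nondegenerate hD.internal, hq.invariant hD hωeven hBext hsc,
      fun _ _ _ hp _ hq' => hq.supersymmetric hp hq',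
      fun _ _ hij _ hp _ hq' => hq.consistent hij hp hq'⟩

/-- For a T*-extension `L ⊕ L*` by an even 2-cocycle `ω`, the canonical
bilinear form `q_L(x+f, y+g) = f(y) + (-1)^{|x||y|} g(x)` makes `(L ⊕ L*, q_L, α')` a
quadratic hom-Lie superalgebra (nondegenerate, invariant, supersymmetric, consistent) if
and only if `ω` is supercyclic. -/
theorem extension_quadratic_iff_supercyclic {K : Type*} [Field K]
    {L : Type*} [AddCommGroup L] [Module K L]
    (D : HomLieSuperData K L) (hD : D.IsHomLieSuper) (hco : D.HasCoadjRep)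
    (ω : L →ₗ[K] L →ₗ[K] Module.Dual K L)
    (hωeven : D.OmegaEven ω) (hωskew : D.OmegaSkew ω) (hωcoc : D.OmegaCocycle ω)
    (Bext : (L × Module.Dual K L) →ₗ[K] (L × Module.Dual K L) →ₗ[K] (L × Module.Dual K L))
    (hBext : D.IsExtBracket ω Bext) (hext : (D.extData Bext).IsHomLieSuper)
    (qExt : (L × Module.Dual K L) →ₗ[K] (L × Module.Dual K L) →ₗ[K] K)
    (hq : ∀ (i j : ZMod 2) (x y : L) (f g : Module.Dual K L),
      x ∈ D.grading i → f ∈ D.dualGrading i → y ∈ D.grading j → g ∈ D.dualGrading j →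
        qExt (x, f) (y, g) = f y + sgn K i j * g x) :
    ((∀ p : L × Module.Dual K L, (∀ q, qExt p q = 0) → p = 0) ∧
      (∀ p q r : L × Module.Dual K L, qExt (Bext p q) r = qExt p (Bext q r)) ∧
      (∀ i j : ZMod 2, ∀ p ∈ (D.extData Bext).grading i, ∀ q ∈ (D.extData Bext).grading j,
        qExt p q = sgn K i j • qExt q p) ∧
      (∀ i j : ZMod 2, i + j ≠ 0 →
        ∀ p ∈ (D.extData Bext).grading i, ∀ q ∈ (D.extData Bext).grading j, qExt p q = 0)) ↔
      D.OmegaSupercyclic ω :=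
  extension_quadratic_iff_supercyclic_general D hD ω hωeven Bext hBext qExt hq
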